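/- arXiv:2006.05254 — 2 statements merged into one kernel-verified Lean document; each statement's English description precedes it below -/
import Mathlib

section
/- Let f : ℝ → ℝ be 1-Lipschitz and m_f-piecewise linear. Then any GroupSort neural network of grouping size 2 satisfying Assumption 1 that represents f with depth q has size at least (1/2)(q − 1) m_f^{1/(q−1)}. -/
open Matrix

/-- A GroupSort feedforward neural network with grouping size `k`, input dimension `d`
and real output.  `depth` is the number of affine layers (`q` in the paper), so there are
`depth - 1` hidden layers of widths `width 1, …, width (depth - 1)` (each divisible by `k`),
with `width 0 = d` (input) and `width depth = 1` (output). -/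
structure GroupSortNet (k d : ℕ) where
  depth : ℕ
  depth_pos : 1 ≤ depth
  width : ℕ → ℕ
  width_in : width 0 = d
  width_out : width depth = 1
  width_div : ∀ i, 1 ≤ i → i ≤ depth - 1 → k ∣ width i
  V : (i : ℕ) → Matrix (Fin (width (i + 1))) (Fin (width i)) ℝ
  c : (i : ℕ) → Fin (width (i + 1)) → ℝ

/-- The GroupSort activation with grouping size `k`: the coordinates are split into
consecutive groups of `k` elements and each group is sorted in decreasing order. -/
noncomputable def groupSortFun (k : ℕ) {ν : ℕ} (x : Fin ν → ℝ) : Fin ν → ℝ := fun i =>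
  if hk : 0 < k then
    let grp : Fin k → ℝ := fun j =>
      if h : ((i : ℕ) / k) * k + (j : ℕ) < ν then x ⟨((i : ℕ) / k) * k + (j : ℕ), h⟩ else 0
    (grp ∘ Tuple.sort grp)
      ⟨k - 1 - (i : ℕ) % k, lt_of_le_of_lt (Nat.sub_le _ _) (Nat.sub_lt hk Nat.one_pos)⟩
  else x i

/-- Output of the hidden layers: `post x i` is the (activated) output of layer `i`. -/
noncomputable def GroupSortNet.post {k d : ℕ} (N : GroupSortNet k d) (x : Fin d → ℝ) :
    (i : ℕ) → Fin (N.width i) → ℝ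
  | 0 => fun j => x (Fin.cast N.width_in j)
  | i + 1 => groupSortFun k (N.V i *ᵥ N.post x i + N.c i)

/-- The real-valued function computed by the network (no activation after the last
affine layer). -/
noncomputable def GroupSortNet.eval {k d : ℕ} (N : GroupSortNet k d) (x : Fin d → ℝ) : ℝ :=
  (N.V (N.depth - 1) *ᵥ N.post x (N.depth - 1) + N.c (N.depth - 1))
    ⟨0, by
      have h : N.depth - 1 + 1 = N.depth := Nat.succ_pred_eq_of_pos N.depth_pos
      rw [h, N.width_out]
      exact Nat.one_pos⟩

/-- The size of the network: the sum of the widths of the hidden layers. -/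
def GroupSortNet.size {k d : ℕ} (N : GroupSortNet k d) : ℕ :=
  ∑ i ∈ Finset.Icc 1 (N.depth - 1), N.width i

/-- Assumption 1: `‖V₁‖_{2,∞} ≤ 1` (every row of `V₁` has Euclidean norm at most `1`),
`‖V_i‖_∞ ≤ 1` for `i = 2, …, q` (every row has `ℓ¹`-norm at most `1`), and all offsets
are bounded by some constant `K₂ ≥ 0`. -/
def GroupSortNet.Assumption1 {k d : ℕ} (N : GroupSortNet k d) : Prop :=
  (∀ r, ∑ j, (N.V 0 r j) ^ 2 ≤ 1) ∧
  (∀ i, 1 ≤ i → i < N.depth → ∀ r, ∑ j, |N.V i r j| ≤ 1) ∧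
  (∃ K₂ : ℝ, 0 ≤ K₂ ∧ ∀ i, i < N.depth → ∀ r, |N.c i r| ≤ K₂)

/-- A (possibly unbounded, possibly partly open) polyhedral set: a finite intersection of
(strict or non-strict) affine half-spaces. -/
def IsPolyhedralSet {d : ℕ} (S : Set (Fin d → ℝ)) : Prop :=
  ∃ (n : ℕ) (a : Fin n → Fin d → ℝ) (b : Fin n → ℝ) (strict : Fin n → Bool),
    S = {x | ∀ i, if strict i then ∑ j, a i j * x j < b i else ∑ j, a i j * x j ≤ b i}

/-- `f` is a continuous `m`-piecewise linear function on `ℝ^d` with pieces `Ω` and affine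
functions `x ↦ ⟨a i, x⟩ + b i`. -/
def IsPWLWith {d : ℕ} (f : (Fin d → ℝ) → ℝ) (m : ℕ)
    (Ω : Fin m → Set (Fin d → ℝ)) (a : Fin m → Fin d → ℝ) (b : Fin m → ℝ) : Prop :=
  Continuous f ∧
  (∀ i, IsPolyhedralSet (Ω i)) ∧
  (∀ i j, i ≠ j → Disjoint (Ω i) (Ω j)) ∧
  (⋃ i, Ω i) = Set.univ ∧
  (∀ i, ∀ x ∈ Ω i, f x = ∑ j, a i j * x j + b i)

/-- There is a partition of `ℝ^d` into `M` polyhedral sets, refining the partition `Ω`,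
on each of which no difference `ℓ_i - ℓ_j` of two affine pieces changes sign. -/
def IsSignRefinement {d : ℕ} (m : ℕ) (Ω : Fin m → Set (Fin d → ℝ))
    (a : Fin m → Fin d → ℝ) (b : Fin m → ℝ) (M : ℕ) : Prop :=
  ∃ Ω' : Fin M → Set (Fin d → ℝ),
    (∀ p, IsPolyhedralSet (Ω' p)) ∧
    (∀ p q, p ≠ q → Disjoint (Ω' p) (Ω' q)) ∧
    (⋃ p, Ω' p) = Set.univ ∧
    (∀ p, ∃ i, Ω' p ⊆ Ω i) ∧
    (∀ p : Fin M, ∀ i j : Fin m,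
      (∀ x ∈ Ω' p, ∑ t, a i t * x t + b i ≤ ∑ t, a j t * x t + b j) ∨
      (∀ x ∈ Ω' p, ∑ t, a j t * x t + b j ≤ ∑ t, a i t * x t + b i))

/-- `f : ℝ → ℝ` is a continuous `m`-piecewise linear function: `ℝ` is partitioned into
`m` intervals on the `i`-th of which `f x = a i * x + b i`. -/
def IsPWLRealWith (f : ℝ → ℝ) (m : ℕ) (I : Fin m → Set ℝ) (a b : Fin m → ℝ) : Prop :=
  Continuous f ∧
  (∀ i, (I i).OrdConnected) ∧
  (∀ i j, i ≠ j → Disjoint (I i) (I j)) ∧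
  (⋃ i, I i) = Set.univ ∧
  (∀ i, ∀ x ∈ I i, f x = a i * x + b i)

def IsPWLReal (f : ℝ → ℝ) (m : ℕ) : Prop :=
  ∃ I a b, IsPWLRealWith f m I a b

/-!
Restricted to a line, the network is affine on each interval of a finite partition of `ℝ`.
On an interval where its input is affine, a GroupSort layer of width `ν` (grouping size `2`)
just selects fixed coordinates as long as none of its `ν / 2` pairwise differences changes
sign. These differences are affine, hence each is of constant sign on both sides of a
threshold, and the number of thresholds already passed cuts the interval into at most
`ν / 2 + 1` intervals. So `f` has at most `∏ (ν_i / 2 + 1) ≤ ∏ ν_i` pieces, minimality gives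
`m_f ≤ ∏ ν_i`, and AM–GM turns this into `(q - 1) m_f ^ (1 / (q - 1)) ≤ ∑ ν_i`. A hidden
layer of width `0` would make `f` constant, which `m_f ≥ 2` excludes.
-/

open Set Function

structure IsIntervalPartition {α ι : Type*} [Preorder α] (I : ι → Set α) (S : Set α) : Prop where
  ordConnected : ∀ i, (I i).OrdConnected
  pairwise_disjoint : Pairwise (Disjoint on I)
  iUnion_eq : ⋃ i, I i = S

namespace IsIntervalPartition

variable {α ι κ : Type*} [Preorder α] {I : ι → Set α} {S : Set α}

lemma subset (h : IsIntervalPartition I S) (i : ι) : I i ⊆ S :=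
  h.iUnion_eq ▸ subset_iUnion I i

lemma of_unique [Unique ι] (hS : S.OrdConnected) : IsIntervalPartition (fun _ : ι => S) S :=
  ⟨fun _ => hS, fun i j hij => (hij (Subsingleton.elim i j)).elim, iUnion_const S⟩

lemma comp_equiv (h : IsIntervalPartition I S) (e : κ ≃ ι) : IsIntervalPartition (I ∘ e) S :=
  ⟨fun k => h.ordConnected (e k), h.pairwise_disjoint.comp_of_injective e.injective,
    (e.surjective.iUnion_comp I).trans h.iUnion_eq⟩

lemma prod (h : IsIntervalPartition I S) {J : ι → κ → Set α}
    (hJ : ∀ i, IsIntervalPartition (J i) (I i)) :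
    IsIntervalPartition (fun p : ι × κ => J p.1 p.2) S where
  ordConnected p := (hJ p.1).ordConnected p.2
  pairwise_disjoint := by
    rintro ⟨i, k⟩ ⟨i', k'⟩ hne
    by_cases hi : i = i'
    · subst hi
      exact (hJ i).pairwise_disjoint fun hk => hne (Prod.ext rfl hk)
    · exact (h.pairwise_disjoint hi).mono ((hJ i).subset k) ((hJ i').subset k')
  iUnion_eq := by
    simp only [iUnion_prod', (hJ _).iUnion_eq, h.iUnion_eq]

end IsIntervalPartition

section UpperSetCount

variable {α : Type*} [LinearOrder α]

lemma mem_iff_mem_of_ncard_eq {κ : Type*} [Finite κ] {U : κ → Set α}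
    (hU : ∀ t, IsUpperSet (U t)) {x y : α}
    (hxy : {t | x ∈ U t}.ncard = {t | y ∈ U t}.ncard) (t : κ) : x ∈ U t ↔ y ∈ U t := by
  wlog hle : x ≤ y generalizing x y
  · exact (this hxy.symm (le_of_not_ge hle)).symm
  have hsub : {t | x ∈ U t} ⊆ {t | y ∈ U t} := fun t ht => hU t hle ht
  exact Set.ext_iff.1 (eq_of_subset_of_ncard_le hsub hxy.ge) t

/-- The cells are the level sets of `x ↦ #{t | x ∈ U t}`: upper sets of a linear order form a
chain, so this count determines which `U t` contain `x`. -/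
lemma exists_isIntervalPartition_subset_or_disjoint {k : ℕ} {S : Set α} (hS : S.OrdConnected)
    {U : Fin k → Set α} (hU : ∀ t, IsUpperSet (U t)) :
    ∃ I : Fin (k + 1) → Set α, IsIntervalPartition I S ∧
      ∀ j t, I j ⊆ U t ∨ Disjoint (I j) (U t) := by
  set n : α → ℕ := fun x => {t | x ∈ U t}.ncard
  have hn : Monotone n := fun x y hxy => ncard_le_ncard fun t ht => hU t hxy ht
  have hnk : ∀ x, n x < k + 1 := fun x =>
    Nat.lt_succ_of_le ((ncard_le_card _).trans (Nat.card_fin k).le)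
  refine ⟨fun j => S ∩ n ⁻¹' {(j : ℕ)},
    ⟨fun j => hS.inter (ordConnected_singleton.preimage_mono hn), ?_, ?_⟩, ?_⟩
  · exact fun j j' hne => disjoint_left.2 fun x hx hx' => hne (Fin.ext (hx.2.symm.trans hx'.2))
  · refine (iUnion_subset fun j => inter_subset_left).antisymm fun x hx => ?_
    exact mem_iUnion.2 ⟨⟨n x, hnk x⟩, hx, rfl⟩
  · intro j t
    by_cases h : ∃ x ∈ S ∩ n ⁻¹' {(j : ℕ)}, x ∈ U t
    · obtain ⟨x, hx, hxU⟩ := h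
      exact Or.inl fun y hy => (mem_iff_mem_of_ncard_eq hU (hx.2.trans hy.2.symm) t).1 hxU
    · push Not at h
      exact Or.inr (disjoint_left.2 h)

lemma exists_isIntervalPartition_forall_nonneg_or_nonpos {k : ℕ} {S : Set α}
    (hS : S.OrdConnected) {ψ : Fin k → α → ℝ} (hψ : ∀ t, Monotone (ψ t) ∨ Antitone (ψ t)) :
    ∃ I : Fin (k + 1) → Set α, IsIntervalPartition I S ∧
      ∀ j t, (∀ x ∈ I j, 0 ≤ ψ t x) ∨ (∀ x ∈ I j, ψ t x ≤ 0) := by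
  have hU : ∀ t, ∃ U : Set α, IsUpperSet U ∧ ∀ A : Set α, A ⊆ U ∨ Disjoint A U →
      (∀ x ∈ A, 0 ≤ ψ t x) ∨ (∀ x ∈ A, ψ t x ≤ 0) := by
    intro t
    rcases hψ t with hmono | hanti
    · refine ⟨ψ t ⁻¹' Ici 0, (isUpperSet_Ici 0).preimage hmono, ?_⟩
      rintro A (hA | hA)
      · exact Or.inl fun x hx => hA hx
      · exact Or.inr fun x hx => (not_le.1 (disjoint_left.1 hA hx)).le
    · refine ⟨ψ t ⁻¹' Iic 0, fun x y hxy hx => (hanti hxy).trans hx, ?_⟩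
      rintro A (hA | hA)
      · exact Or.inr fun x hx => hA hx
      · exact Or.inl fun x hx => (not_le.1 (disjoint_left.1 hA hx)).le
  choose U hUup hUsign using hU
  obtain ⟨I, hI, hIU⟩ := exists_isIntervalPartition_subset_or_disjoint hS hUup
  exact ⟨I, hI, fun j t => hUsign t (I j) (hIU j t)⟩

end UpperSetCount

lemma comp_sort_fin_two {α : Type*} [LinearOrder α] (g : Fin 2 → α) :
    g (Tuple.sort g 0) = min (g 0) (g 1) ∧ g (Tuple.sort g 1) = max (g 0) (g 1) := by
  have hle : g (Tuple.sort g 0) ≤ g (Tuple.sort g 1) := Tuple.monotone_sort g (by decide)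
  rcases (by decide : ∀ σ : Equiv.Perm (Fin 2), σ = 1 ∨ σ = Equiv.swap 0 1) (Tuple.sort g)
    with h | h <;> simp only [h, Equiv.Perm.coe_one, id, Equiv.swap_apply_left,
      Equiv.swap_apply_right] at hle ⊢
  · exact ⟨(min_eq_left hle).symm, (max_eq_right hle).symm⟩
  · exact ⟨(min_eq_right hle).symm, (max_eq_left hle).symm⟩

lemma groupSortFun_two_apply {ν : ℕ} (x : Fin ν → ℝ) (i : Fin ν) (h : (i : ℕ) / 2 * 2 + 1 < ν) :
    groupSortFun 2 x i =
      if (i : ℕ) % 2 = 0 then max (x ⟨i / 2 * 2, by omega⟩) (x ⟨i / 2 * 2 + 1, h⟩)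
      else min (x ⟨i / 2 * 2, by omega⟩) (x ⟨i / 2 * 2 + 1, h⟩) := by
  set g : Fin 2 → ℝ := fun j => if h : (i : ℕ) / 2 * 2 + j < ν then x ⟨_, h⟩ else 0
  have hg0 : g 0 = x ⟨i / 2 * 2, by omega⟩ := dif_pos (by simp only [Fin.val_zero]; omega)
  have hg1 : g 1 = x ⟨i / 2 * 2 + 1, h⟩ := dif_pos h
  obtain ⟨hmin, hmax⟩ := comp_sort_fin_two g
  show g (Tuple.sort g ⟨2 - 1 - (i : ℕ) % 2, _⟩) = _
  rw [← hg0, ← hg1]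
  split_ifs with hi
  · convert hmax using 3
    ext
    simp [hi]
  · convert hmin using 3
    ext
    simp only [Fin.val_zero]
    omega

lemma exists_groupSortFun_two_eq_comp {β : Type*} {ν : ℕ} (hν : 2 ∣ ν) {y : β → Fin ν → ℝ}
    {A : Set β} (hA : ∀ t : Fin (ν / 2),
      (∀ z ∈ A, y z ⟨t * 2 + 1, by omega⟩ ≤ y z ⟨t * 2, by omega⟩) ∨
      (∀ z ∈ A, y z ⟨t * 2, by omega⟩ ≤ y z ⟨t * 2 + 1, by omega⟩)) :
    ∃ π : Fin ν → Fin ν, ∀ z ∈ A, groupSortFun 2 (y z) = y z ∘ π := by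
  have hcoord : ∀ i : Fin ν, ∃ j, ∀ z ∈ A, groupSortFun 2 (y z) i = y z j := by
    intro i
    have hi : (i : ℕ) / 2 * 2 + 1 < ν := by omega
    simp_rw [groupSortFun_two_apply _ i hi]
    rcases hA ⟨i / 2, by omega⟩ with h | h <;> by_cases hpar : (i : ℕ) % 2 = 0 <;>
      simp only [hpar, if_true, if_false]
    · exact ⟨_, fun z hz => max_eq_left (h z hz)⟩
    · exact ⟨_, fun z hz => min_eq_right (h z hz)⟩
    · exact ⟨_, fun z hz => max_eq_right (h z hz)⟩
    · exact ⟨_, fun z hz => min_eq_left (h z hz)⟩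
  choose π hπ using hcoord
  exact ⟨π, fun z hz => funext fun i => hπ i z hz⟩

def IsPiecewiseAffine {E : Type*} [AddCommGroup E] [Module ℝ E] (g : ℝ → E) (p : ℕ) : Prop :=
  ∃ I : Fin p → Set ℝ, IsIntervalPartition I univ ∧ ∀ j, ∃ a b : E, ∀ x ∈ I j, g x = x • a + b

namespace IsPiecewiseAffine

variable {E F : Type*} [AddCommGroup E] [Module ℝ E] [AddCommGroup F] [Module ℝ F]
  {g : ℝ → E} {p : ℕ}

lemma of_eq_smul_add {a b : E} (h : ∀ x, g x = x • a + b) : IsPiecewiseAffine g 1 :=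
  ⟨fun _ => univ, .of_unique ordConnected_univ, fun _ => ⟨a, b, fun x _ => h x⟩⟩

lemma comp_affineMap (hg : IsPiecewiseAffine g p) (L : E →ᵃ[ℝ] F) :
    IsPiecewiseAffine (L ∘ g) p := by
  obtain ⟨I, hI, hI_aff⟩ := hg
  refine ⟨I, hI, fun j => ?_⟩
  obtain ⟨a, b, hab⟩ := hI_aff j
  refine ⟨L.linear a, L b, fun x hx => ?_⟩
  rw [Function.comp_apply, hab x hx, ← vadd_eq_add, L.map_vadd, vadd_eq_add, L.linear.map_smul]

lemma groupSortFun_two {ν : ℕ} (hν : 2 ∣ ν) {g : ℝ → Fin ν → ℝ}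
    (hg : IsPiecewiseAffine g p) : IsPiecewiseAffine (groupSortFun 2 ∘ g) (p * (ν / 2 + 1)) := by
  obtain ⟨I, hI, hI_aff⟩ := hg
  choose a b hab using hI_aff
  set y : Fin p → ℝ → Fin ν → ℝ := fun j x => x • a j + b j
  have hdiff : ∀ j (t : Fin (ν / 2)),
      Monotone (fun x => y j x ⟨t * 2, by omega⟩ - y j x ⟨t * 2 + 1, by omega⟩) ∨
      Antitone (fun x => y j x ⟨t * 2, by omega⟩ - y j x ⟨t * 2 + 1, by omega⟩) := by
    intro j t
    simp only [y, Pi.add_apply, Pi.smul_apply, smul_eq_mul]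
    rcases le_total (a j ⟨t * 2 + 1, by omega⟩) (a j ⟨t * 2, by omega⟩) with h | h
    · exact Or.inl fun x x' hxx' => by nlinarith
    · exact Or.inr fun x x' hxx' => by nlinarith
  have hcells : ∀ j, ∃ J : Fin (ν / 2 + 1) → Set ℝ, IsIntervalPartition J (I j) ∧
      ∀ l, ∃ π : Fin ν → Fin ν, ∀ x ∈ J l, groupSortFun 2 (y j x) = y j x ∘ π := by
    intro j
    obtain ⟨J, hJ, hJsign⟩ :=
      exists_isIntervalPartition_forall_nonneg_or_nonpos (hI.ordConnected j) (hdiff j)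
    exact ⟨J, hJ, fun l => exists_groupSortFun_two_eq_comp hν fun t => (hJsign l t).imp
      (fun h z hz => sub_nonneg.1 (h z hz)) (fun h z hz => sub_nonpos.1 (h z hz))⟩
  choose J hJ π hπ using hcells
  refine ⟨_, (hI.prod hJ).comp_equiv finProdFinEquiv.symm, fun q => ?_⟩
  set jl := finProdFinEquiv.symm q
  refine ⟨a jl.1 ∘ π jl.1 jl.2, b jl.1 ∘ π jl.1 jl.2, fun x hx => ?_⟩
  rw [Function.comp_apply, hab _ x ((hJ jl.1).subset jl.2 hx), hπ _ _ x hx]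
  rfl

lemma isPWLReal {f : ℝ → ℝ} (hf : Continuous f) (h : IsPiecewiseAffine f p) : IsPWLReal f p := by
  obtain ⟨I, hI, hI_aff⟩ := h
  choose a b hab using hI_aff
  exact ⟨I, a, b, hf, hI.ordConnected, fun i j h => hI.pairwise_disjoint h, hI.iUnion_eq,
    fun j x hx => by rw [hab j x hx, smul_eq_mul, mul_comm]⟩

end IsPiecewiseAffine

namespace GroupSortNet

variable {k d : ℕ}

def layer (N : GroupSortNet k d) (i : ℕ) :
    (Fin (N.width i) → ℝ) →ᵃ[ℝ] (Fin (N.width (i + 1)) → ℝ) :=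
  (N.V i).mulVecLin.toAffineMap + AffineMap.const ℝ _ (N.c i)

lemma layer_apply (N : GroupSortNet k d) (i : ℕ) (v : Fin (N.width i) → ℝ) :
    N.layer i v = N.V i *ᵥ v + N.c i := by
  simp [layer]

lemma post_succ (N : GroupSortNet k d) (x : Fin d → ℝ) (i : ℕ) :
    N.post x (i + 1) = groupSortFun k (N.layer i (N.post x i)) := by
  rw [layer_apply]
  rfl

lemma post_eq_post_of_le (N : GroupSortNet k d) {x y : Fin d → ℝ} {i j : ℕ} (hji : j ≤ i)
    (h : N.post x j = N.post y j) : N.post x i = N.post y i := by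
  induction i, hji using Nat.le_induction with
  | base => exact h
  | succ i _ ih => rw [post_succ, post_succ, ih]

lemma eval_eq_of_width_eq_zero (N : GroupSortNet k d) {j : ℕ} (hj : j ≤ N.depth - 1)
    (h0 : N.width j = 0) (x y : Fin d → ℝ) : N.eval x = N.eval y := by
  have hpost : N.post x j = N.post y j := funext fun t => absurd t.2 (by omega)
  simp only [eval, N.post_eq_post_of_le hj hpost]

lemma isPiecewiseAffine_eval_of_width_eq_zero (N : GroupSortNet k d) {j : ℕ}
    (hj : j ≤ N.depth - 1) (h0 : N.width j = 0) :
    IsPiecewiseAffine (fun x : ℝ => N.eval fun _ => x) 1 :=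
  .of_eq_smul_add (a := 0) (b := N.eval fun _ => 0) fun x => by
    simp [N.eval_eq_of_width_eq_zero hj h0 _ (fun _ => 0)]

lemma isPiecewiseAffine_post (N : GroupSortNet 2 d) {i : ℕ} (hi : i ≤ N.depth - 1) :
    IsPiecewiseAffine (fun x : ℝ => N.post (fun _ => x) i)
      (∏ t ∈ Finset.Icc 1 i, (N.width t / 2 + 1)) := by
  induction i with
  | zero =>
    exact .of_eq_smul_add (a := fun _ => 1) (b := 0) fun x => by ext; simp [post]
  | succ i ih =>
    rw [Finset.prod_Icc_succ_top (by omega)]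
    simp only [post_succ]
    exact ((ih (by omega)).comp_affineMap (N.layer i)).groupSortFun_two
      (N.width_div _ (by omega) hi)

lemma isPiecewiseAffine_eval (N : GroupSortNet 2 d) :
    IsPiecewiseAffine (fun x : ℝ => N.eval (fun _ => x))
      (∏ t ∈ Finset.Icc 1 (N.depth - 1), (N.width t / 2 + 1)) := by
  have h0 : 0 < N.width (N.depth - 1 + 1) := by
    rw [Nat.sub_add_cancel N.depth_pos, N.width_out]
    exact one_pos
  convert (N.isPiecewiseAffine_post le_rfl).comp_affineMap
    ((LinearMap.proj ⟨0, h0⟩).toAffineMap.comp (N.layer (N.depth - 1))) using 1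
  funext x
  simp [eval, layer_apply]

end GroupSortNet

lemma card_mul_rpow_le_sum {ι : Type*} {s : Finset ι} (hs : s.Nonempty) {z : ι → ℝ}
    (hz : ∀ i ∈ s, 0 ≤ z i) {P : ℝ} (hP0 : 0 ≤ P) (hP : P ≤ ∏ i ∈ s, z i) :
    (s.card : ℝ) * P ^ (1 / (s.card : ℝ)) ≤ ∑ i ∈ s, z i := by
  have hcard : (0 : ℝ) < s.card := by exact_mod_cast hs.card_pos
  have hamgm := Real.geom_mean_le_arith_mean s (fun _ => 1) z (fun _ _ => zero_le_one)
    (by simpa using hcard) hz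
  simp only [Real.rpow_one, Finset.sum_const, nsmul_eq_mul, mul_one, one_mul] at hamgm
  calc (s.card : ℝ) * P ^ (1 / (s.card : ℝ))
      ≤ s.card * ((∑ i ∈ s, z i) / s.card) := by
        gcongr
        exact (Real.rpow_le_rpow hP0 hP (by positivity)).trans (by simpa using hamgm)
    _ = ∑ i ∈ s, z i := by field_simp

theorem groupSortNet_size_lower_bound_general (f : ℝ → ℝ) (hlip : LipschitzWith 1 f)
    (m : ℕ) (hm : 2 ≤ m) (hmin : ∀ m' : ℕ, m' < m → ¬ IsPWLReal f m')
    (N : GroupSortNet 2 1)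
    (hrep : ∀ x : ℝ, N.eval (fun _ => x) = f x) :
    (1 / 2 : ℝ) * ((N.depth : ℝ) - 1) * (m : ℝ) ^ ((1 : ℝ) / ((N.depth : ℝ) - 1))
      ≤ (N.size : ℝ) := by
  obtain hq | hq := Nat.lt_or_ge N.depth 2
  · simp [show N.depth = 1 by have := N.depth_pos; omega]
  have hpieces : ∀ p, IsPiecewiseAffine (fun x : ℝ => N.eval fun _ => x) p → m ≤ p :=
    fun p hp => not_lt.1 fun h => hmin p h ((funext hrep ▸ hp).isPWLReal hlip.continuous)
  have hwidth : ∀ t ∈ Finset.Icc 1 (N.depth - 1), 2 ≤ N.width t := by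
    intro t ht
    rw [Finset.mem_Icc] at ht
    by_contra! hlt
    have h0 : N.width t = 0 := by have := N.width_div t ht.1 ht.2; omega
    have := hpieces 1 (N.isPiecewiseAffine_eval_of_width_eq_zero ht.2 h0)
    omega
  have hprod : m ≤ ∏ t ∈ Finset.Icc 1 (N.depth - 1), N.width t :=
    (hpieces _ N.isPiecewiseAffine_eval).trans
      (Finset.prod_le_prod' fun t ht => by have := hwidth t ht; omega)
  have hcard : (N.depth : ℝ) - 1 = (Finset.Icc 1 (N.depth - 1)).card := by
    rw [Nat.card_Icc, Nat.add_sub_cancel, Nat.cast_sub N.depth_pos, Nat.cast_one]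
  have hamgm := card_mul_rpow_le_sum (s := Finset.Icc 1 (N.depth - 1))
    (Finset.nonempty_Icc.2 (by omega)) (fun t _ => Nat.cast_nonneg (N.width t))
    (Nat.cast_nonneg m) (by exact_mod_cast hprod)
  rw [← hcard, ← Nat.cast_sum] at hamgm
  have : 0 ≤ ((N.depth : ℝ) - 1) * (m : ℝ) ^ ((1 : ℝ) / ((N.depth : ℝ) - 1)) := by
    rw [hcard]
    positivity
  rw [GroupSortNet.size]
  linarith

/-- Depth/size trade-off: if `f : ℝ → ℝ` is `1`-Lipschitz and `m`-piecewise linear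
(with `m` minimal), then any GroupSort network of grouping size `2` satisfying
Assumption 1 that represents `f` with depth `q` has size at least
`(1/2)(q-1) m^(1/(q-1))`. -/
theorem groupSortNet_size_lower_bound (f : ℝ → ℝ) (hlip : LipschitzWith 1 f)
    (m : ℕ) (hm : 2 ≤ m) (hf : IsPWLReal f m) (hmin : ∀ m' : ℕ, m' < m → ¬ IsPWLReal f m')
    (N : GroupSortNet 2 1) (hA : N.Assumption1)
    (hrep : ∀ x : ℝ, N.eval (fun _ => x) = f x) :
    (1 / 2 : ℝ) * ((N.depth : ℝ) - 1) * (m : ℝ) ^ ((1 : ℝ) / ((N.depth : ℝ) - 1))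
      ≤ (N.size : ℝ) :=
  groupSortNet_size_lower_bound_general f hlip m hm hmin N hrep
end

section
/- Let ε > 0 and f : [0,1] → ℝ be 1-Lipschitz and convex (or concave). Then there exists a GroupSort neural network D of grouping size 2 satisfying Assumption 1 with sup_{x ∈ [0,1]} |f(x) − D(x)| ≤ ε, whose depth is ⌈log₂(1/ε)⌉ + 1 and whose size is at most 2·2^{⌈log₂(1/ε)⌉} − 1 (in particular O(1/ε)). -/
open Matrix

/-!
Let `g` be convex and `1`-Lipschitz on `[0, 1]` (for concave `f` take `g = -f`). The chord of `g`
over a dyadic interval of length `2⁻ⁿ` lies below `g` outside that interval (convexity) and within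
`2⁻ⁿ` of `g` on it (the Lipschitz bound), so `g` is within `2⁻ⁿ` of the maximum of its `2ⁿ`
dyadic chords. A GroupSort activation of grouping size `2` computes maxima of pairs, so a binary
tree of `n` such layers on top of one affine layer evaluates this maximum, with `2ⁿ⁺¹ - 2` neurons.
-/

open Finset

noncomputable def GroupSortNet.preact {k d : ℕ} (N : GroupSortNet k d) (x : Fin d → ℝ) (i : ℕ) :
    Fin (N.width (i + 1)) → ℝ :=
  N.V i *ᵥ N.post x i + N.c i

theorem GroupSortNet.post_succ_s14 {k d : ℕ} (N : GroupSortNet k d) (x : Fin d → ℝ) (i : ℕ) :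
    N.post x (i + 1) = groupSortFun k (N.preact x i) :=
  rfl

theorem comp_sort_one_eq_max {α : Type*} [LinearOrder α] (h : Fin 2 → α) :
    (h ∘ Tuple.sort h) 1 = max (h 0) (h 1) := by
  have hle : h (Tuple.sort h 0) ≤ h (Tuple.sort h 1) := Tuple.monotone_sort h (by decide)
  have hne : Tuple.sort h 0 ≠ Tuple.sort h 1 := (Tuple.sort h).injective.ne (by decide)
  simp only [Function.comp_apply]
  generalize Tuple.sort h 0 = i, Tuple.sort h 1 = j at *
  fin_cases i <;> fin_cases j <;> simp_all

theorem groupSortFun_two_even {ν : ℕ} (x : Fin ν → ℝ) (m : ℕ) (h : 2 * m + 1 < ν) :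
    groupSortFun 2 x ⟨2 * m, by omega⟩ = max (x ⟨2 * m, by omega⟩) (x ⟨2 * m + 1, h⟩) := by
  rw [groupSortFun, dif_pos two_pos]
  convert comp_sort_one_eq_max _ using 2
  · ext; simp
  · rfl
  all_goals
    simp only [Fin.val_zero, Fin.val_one, Nat.mul_div_cancel_left m two_pos, mul_comm m 2, add_zero]
    rw [dif_pos (by omega)]

theorem Fin.sum_ite_val_eq {M : Type*} [AddCommMonoid M] {ν p : ℕ} (hp : p < ν) (f : Fin ν → M) :
    ∑ j : Fin ν, (if (j : ℕ) = p then f j else 0) = f ⟨p, hp⟩ := by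
  rw [sum_eq_single_of_mem ⟨p, hp⟩ (mem_univ _) fun j _ hj => if_neg (hj ∘ Fin.ext)]
  exact if_pos rfl

noncomputable def blockMax (ℓ : ℕ → ℝ) (i m : ℕ) : ℝ :=
  (Ico (2 ^ i * m) (2 ^ i * (m + 1))).sup'
    (nonempty_Ico.2 (Nat.mul_lt_mul_of_pos_left m.lt_succ_self (Nat.two_pow_pos i))) ℓ

theorem blockMax_zero (ℓ : ℕ → ℝ) (m : ℕ) : blockMax ℓ 0 m = ℓ m := by
  simp [blockMax]

theorem blockMax_succ (ℓ : ℕ → ℝ) (i m : ℕ) :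
    blockMax ℓ (i + 1) m = max (blockMax ℓ i (2 * m)) (blockMax ℓ i (2 * m + 1)) := by
  have hsplit : Ico (2 ^ (i + 1) * m) (2 ^ (i + 1) * (m + 1)) =
      Ico (2 ^ i * (2 * m)) (2 ^ i * (2 * m + 1)) ∪
        Ico (2 ^ i * (2 * m + 1)) (2 ^ i * (2 * m + 1 + 1)) := by
    rw [Ico_union_Ico_eq_Ico (by gcongr; omega) (by gcongr; omega)]
    congr 1 <;> ring
  rw [blockMax, sup'_congr _ hsplit fun _ _ => rfl, sup'_union]
  rfl

theorem blockMax_apply_zero (ℓ : ℕ → ℝ) (i : ℕ) :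
    blockMax ℓ i 0 = (range (2 ^ i)).sup' (nonempty_range_iff.2 (by positivity)) ℓ :=
  sup'_congr _ (by rw [range_eq_Ico, mul_zero, zero_add, mul_one]) fun _ _ => rfl

/-- Layer `0` evaluates the `2 ^ n` affine maps `a j * x + b j`; each GroupSort layer puts the
maximum of each pair at its even coordinate, which is all the next layer keeps; the output layer
multiplies by `s`. -/
noncomputable def maxAffineNet (n : ℕ) (a b : ℕ → ℝ) (s : ℝ) : GroupSortNet 2 1 where
  depth := n + 1
  depth_pos := Nat.le_add_left 1 n
  width i := if i = 0 then 1 else 2 ^ (n + 1 - i)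
  width_in := if_pos rfl
  width_out := by simp
  width_div i hi hin := by
    rw [if_neg (by omega)]
    exact dvd_pow_self 2 (by omega)
  V i r j := if i = 0 then a r else if (j : ℕ) = 2 * r then (if i = n then s else 1) else 0
  c i r := if i = 0 then b r else 0

section maxAffineNet

variable (n : ℕ) (a b : ℕ → ℝ) (s : ℝ)

theorem maxAffineNet_width {i : ℕ} (hi : i ≠ 0) :
    (maxAffineNet n a b s).width i = 2 ^ (n + 1 - i) :=
  if_neg hi

theorem maxAffineNet_V_of_ne_zero {i : ℕ} (hi : i ≠ 0)
    (r : Fin ((maxAffineNet n a b s).width (i + 1))) (j : Fin ((maxAffineNet n a b s).width i)) :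
    (maxAffineNet n a b s).V i r j = if (j : ℕ) = 2 * r then (if i = n then s else 1) else 0 :=
  if_neg hi

theorem maxAffineNet_c_of_ne_zero {i : ℕ} (hi : i ≠ 0)
    (r : Fin ((maxAffineNet n a b s).width (i + 1))) :
    (maxAffineNet n a b s).c i r = 0 :=
  if_neg hi

theorem maxAffineNet_width_eq_two_mul {i : ℕ} (hi : i ≠ 0) (hin : i ≤ n) :
    (maxAffineNet n a b s).width i = 2 * (maxAffineNet n a b s).width (i + 1) := by
  rw [maxAffineNet_width n a b s hi, maxAffineNet_width n a b s (Nat.add_one_ne_zero i),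
    ← pow_succ']
  congr 1
  omega

theorem maxAffineNet_preact_zero (x : Fin 1 → ℝ) (r : Fin ((maxAffineNet n a b s).width 1)) :
    (maxAffineNet n a b s).preact x 0 r = a r * x 0 + b r := by
  have hx : ∀ j, (maxAffineNet n a b s).post x 0 j = x 0 := fun j =>
    congrArg x (Subsingleton.elim _ _)
  simp only [GroupSortNet.preact, Pi.add_apply, mulVec, dotProduct, hx]
  change ∑ _ : Fin 1, a r * x 0 + b r = _
  simp

theorem maxAffineNet_preact_of_ne_zero (x : Fin 1 → ℝ) {i : ℕ} (hi : i ≠ 0)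
    (r : Fin ((maxAffineNet n a b s).width (i + 1)))
    (hr : 2 * (r : ℕ) < (maxAffineNet n a b s).width i) :
    (maxAffineNet n a b s).preact x i r =
      (if i = n then s else 1) * (maxAffineNet n a b s).post x i ⟨2 * r, hr⟩ := by
  simp only [GroupSortNet.preact, Pi.add_apply, mulVec, dotProduct,
    maxAffineNet_V_of_ne_zero n a b s hi, maxAffineNet_c_of_ne_zero n a b s hi, add_zero, ite_mul,
    zero_mul]
  exact Fin.sum_ite_val_eq hr _

theorem maxAffineNet_preact_eq_blockMax (x : Fin 1 → ℝ) :
    ∀ i < n, ∀ r, (maxAffineNet n a b s).preact x i r = blockMax (fun j => a j * x 0 + b j) i r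
  | 0, _, r => by rw [maxAffineNet_preact_zero, blockMax_zero]
  | i + 1, hi, r => by
    have hr : 2 * (r : ℕ) + 1 < (maxAffineNet n a b s).width (i + 1) := by
      have := r.isLt
      rw [maxAffineNet_width_eq_two_mul n a b s (Nat.add_one_ne_zero i) hi.le]
      omega
    rw [maxAffineNet_preact_of_ne_zero n a b s x (Nat.add_one_ne_zero i) r (by omega), if_neg hi.ne,
      one_mul, GroupSortNet.post_succ_s14, groupSortFun_two_even _ _ hr,
      maxAffineNet_preact_eq_blockMax x i (by omega),
      maxAffineNet_preact_eq_blockMax x i (by omega), blockMax_succ]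

theorem maxAffineNet_eval (hn : n ≠ 0) (x : Fin 1 → ℝ) :
    (maxAffineNet n a b s).eval x = s * (range (2 ^ n)).sup'
      (nonempty_range_iff.2 (by positivity)) (fun j => a j * x 0 + b j) := by
  obtain ⟨k, rfl⟩ : ∃ k, n = k + 1 := ⟨n - 1, by omega⟩
  have hr : 2 * 0 + 1 < (maxAffineNet (k + 1) a b s).width (k + 1) := by
    rw [maxAffineNet_width _ a b s hn]; simp
  change (maxAffineNet (k + 1) a b s).preact x (k + 1) ⟨0, _⟩ = _
  rw [maxAffineNet_preact_of_ne_zero _ a b s x hn _ (Nat.lt_of_succ_lt hr), if_pos rfl,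
    GroupSortNet.post_succ_s14, groupSortFun_two_even _ _ hr,
    maxAffineNet_preact_eq_blockMax _ a b s x k k.lt_succ_self,
    maxAffineNet_preact_eq_blockMax _ a b s x k k.lt_succ_self, ← blockMax_succ,
    blockMax_apply_zero]

theorem maxAffineNet_eval_of_eq_zero (hn : n = 0) (x : Fin 1 → ℝ) :
    (maxAffineNet n a b s).eval x = a 0 * x 0 + b 0 := by
  subst hn
  exact maxAffineNet_preact_zero 0 a b s x _

theorem maxAffineNet_size : (maxAffineNet n a b s).size = 2 * (2 ^ n - 1) := by
  have hgeom : ∑ k ∈ range n, 2 ^ k = 2 ^ n - 1 := by simpa using Nat.geomSum_eq le_rfl n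
  have hdepth : (maxAffineNet n a b s).depth - 1 = n := rfl
  rw [← hgeom, mul_sum, GroupSortNet.size, hdepth]
  refine sum_nbij' (fun i => n - i) (fun k => n - k) ?_ ?_ ?_ ?_ ?_ <;> intro i hi <;>
    simp only [mem_Icc, mem_range] at hi ⊢ <;> try omega
  rw [maxAffineNet_width n a b s (by omega), ← pow_succ']
  congr 1
  omega

theorem maxAffineNet_assumption1 {K : ℝ} (ha : ∀ j < 2 ^ n, |a j| ≤ 1) (hb : ∀ j < 2 ^ n, |b j| ≤ K)
    (hs : |s| ≤ 1) : (maxAffineNet n a b s).Assumption1 := by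
  have hwidth_one : (maxAffineNet n a b s).width 1 = 2 ^ n := maxAffineNet_width n a b s one_ne_zero
  have hK : 0 ≤ K := (abs_nonneg _).trans (hb 0 (by positivity))
  refine ⟨fun r => ?_, fun i hi hin r => ?_, K, hK, fun i _ r => ?_⟩
  · change ∑ _ : Fin 1, a r ^ 2 ≤ 1
    simpa [sq_le_one_iff_abs_le_one] using ha r (hwidth_one ▸ r.isLt)
  · have hr : 2 * (r : ℕ) < (maxAffineNet n a b s).width i := by
      have := maxAffineNet_width_eq_two_mul n a b s (by omega) (Nat.lt_succ_iff.1 hin)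
      omega
    simp only [maxAffineNet_V_of_ne_zero n a b s (by omega : i ≠ 0), apply_ite abs, abs_zero]
    rw [Fin.sum_ite_val_eq hr]
    split_ifs
    exacts [hs, abs_one.le]
  · rcases eq_or_ne i 0 with rfl | hi
    · exact hb r (hwidth_one ▸ r.isLt)
    · rwa [maxAffineNet_c_of_ne_zero n a b s hi, abs_zero]

end maxAffineNet

theorem LipschitzOnWith.abs_sub_le {s : Set ℝ} {g : ℝ → ℝ} (hg : LipschitzOnWith 1 g s) {x y : ℝ}
    (hx : x ∈ s) (hy : y ∈ s) : |g x - g y| ≤ |x - y| := by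
  simpa [Real.dist_eq] using hg.dist_le_mul x hx y hy

theorem LipschitzOnWith.abs_slope_le {s : Set ℝ} {g : ℝ → ℝ} (hg : LipschitzOnWith 1 g s) {u v : ℝ}
    (hu : u ∈ s) (hv : v ∈ s) : |slope g u v| ≤ 1 := by
  rw [slope_def_field, abs_div]
  exact div_le_one_of_le₀ (hg.abs_sub_le hv hu) (abs_nonneg _)

theorem ConvexOn.add_slope_mul_sub_le {s : Set ℝ} {g : ℝ → ℝ} (hg : ConvexOn ℝ s g) {u v x : ℝ}
    (hu : u ∈ s) (hv : v ∈ s) (hx : x ∈ s) (huv : u < v) (hxuv : x ∉ Set.Ioo u v) :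
    g u + slope g u v * (x - u) ≤ g x := by
  have hgx : (x - u) * slope g u x = g x - g u := by
    simpa only [smul_eq_mul, vsub_eq_sub] using sub_smul_slope g u x
  rcases lt_trichotomy x u with hxu | rfl | hux
  · have := hg.slope_mono hu ⟨hx, hxu.ne⟩ ⟨hv, huv.ne'⟩ (hxu.trans huv).le
    nlinarith
  · simp
  · have := hg.slope_mono hu ⟨hv, huv.ne'⟩ ⟨hx, hux.ne'⟩ (not_lt.1 fun h => hxuv ⟨hux, h⟩)
    nlinarith

theorem LipschitzOnWith.abs_add_slope_mul_sub_sub_le {s : Set ℝ} {g : ℝ → ℝ}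
    (hg : LipschitzOnWith 1 g s) {u v x : ℝ} (hu : u ∈ s) (hv : v ∈ s) (hx : x ∈ s) (hux : u ≤ x)
    (hxv : x ≤ v) : |g u + slope g u v * (x - u) - g x| ≤ v - u := by
  rcases hux.eq_or_lt with rfl | hux'
  · simpa using hxv
  have hd : 0 < v - u := by linarith
  -- the chord at `x` is a convex combination of `g u` and `g v`
  have key : g u + slope g u v * (x - u) - g x =
      ((v - x) * (g u - g x) + (x - u) * (g v - g x)) / (v - u) := by
    rw [slope_def_field]
    field_simp
    ring
  have hgu : |g u - g x| ≤ x - u := by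
    simpa [abs_of_nonpos (sub_nonpos.2 hux)] using hg.abs_sub_le hu hx
  have hgv : |g v - g x| ≤ v - x := by
    simpa [abs_of_nonneg (sub_nonneg.2 hxv)] using hg.abs_sub_le hv hx
  rw [key, abs_div, abs_of_pos hd, div_le_iff₀ hd]
  calc |(v - x) * (g u - g x) + (x - u) * (g v - g x)|
      ≤ (v - x) * |g u - g x| + (x - u) * |g v - g x| := by
        refine (abs_add_le _ _).trans_eq ?_
        rw [abs_mul, abs_mul, abs_of_nonneg (sub_nonneg.2 hxv), abs_of_nonneg (sub_nonneg.2 hux)]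
    _ ≤ (v - x) * (x - u) + (x - u) * (v - x) := by gcongr
    _ ≤ (v - u) * (v - u) := by nlinarith

theorem natCast_div_mem_Icc {j N : ℕ} (h : j ≤ N) : (j : ℝ) / N ∈ Set.Icc (0 : ℝ) 1 :=
  ⟨by positivity, div_le_one_of_le₀ (by exact_mod_cast h) (by positivity)⟩

theorem exists_natCast_div_le_le_succ_div {N : ℕ} (hN : 0 < N) {x : ℝ}
    (hx : x ∈ Set.Icc (0 : ℝ) 1) :
    ∃ j < N, (j : ℝ) / N ≤ x ∧ x ≤ ((j : ℝ) + 1) / N := by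
  have hN' : (0 : ℝ) < N := by exact_mod_cast hN
  rcases hx.2.eq_or_lt with rfl | hx1
  · refine ⟨N - 1, Nat.sub_lt hN one_pos, ?_, ?_⟩
    · exact (natCast_div_mem_Icc (Nat.sub_le N 1)).2
    · rw [Nat.cast_pred hN, sub_add_cancel, div_self hN'.ne']
  · refine ⟨⌊x * N⌋₊, (Nat.floor_lt (by nlinarith [hx.1])).2 (by nlinarith), ?_, ?_⟩
    · rw [div_le_iff₀ hN']
      exact Nat.floor_le (by nlinarith [hx.1])
    · rw [le_div_iff₀ hN']
      exact (Nat.lt_floor_add_one _).le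

noncomputable def gridSlope (g : ℝ → ℝ) (N j : ℕ) : ℝ :=
  slope g (j / N) ((j + 1) / N)

noncomputable def gridIntercept (g : ℝ → ℝ) (N j : ℕ) : ℝ :=
  g (j / N) - gridSlope g N j * (j / N)

section grid

variable {g : ℝ → ℝ} {N j : ℕ}

theorem gridSlope_mul_add_gridIntercept (x : ℝ) :
    gridSlope g N j * x + gridIntercept g N j =
      g (j / N) + slope g (j / N) ((j + 1) / N) * (x - j / N) := by
  rw [gridIntercept, gridSlope]
  ring

theorem add_one_div_sub_div (a b : ℝ) : (a + 1) / b - a / b = 1 / b := by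
  rw [← sub_div, add_sub_cancel_left]

theorem natCast_add_one_div_mem_Icc (hj : j < N) : ((j : ℝ) + 1) / N ∈ Set.Icc (0 : ℝ) 1 := by
  exact_mod_cast natCast_div_mem_Icc hj

theorem abs_gridSlope_le (hlip : LipschitzOnWith 1 g (Set.Icc 0 1)) (hj : j < N) :
    |gridSlope g N j| ≤ 1 :=
  hlip.abs_slope_le (natCast_div_mem_Icc hj.le) (natCast_add_one_div_mem_Icc hj)

theorem abs_gridIntercept_le (hlip : LipschitzOnWith 1 g (Set.Icc 0 1)) (hj : j < N) :
    |gridIntercept g N j| ≤ |g 0| + 2 := by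
  have hu := natCast_div_mem_Icc (N := N) hj.le
  have hgu : |g (j / N)| ≤ |g 0| + 1 := by
    have := hlip.abs_sub_le hu ⟨le_rfl, zero_le_one⟩
    rw [sub_zero, abs_of_nonneg hu.1] at this
    linarith [abs_sub_abs_le_abs_sub (g (j / N)) (g 0), hu.2]
  calc |gridIntercept g N j| ≤ |g (j / N)| + |gridSlope g N j| * |(j : ℝ) / N| := by
        rw [gridIntercept, ← abs_mul]
        exact abs_sub _ _
    _ ≤ (|g 0| + 1) + 1 * 1 := by
        gcongr
        · exact abs_gridSlope_le hlip hj
        · exact (abs_of_nonneg hu.1).trans_le hu.2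
    _ = |g 0| + 2 := by ring

theorem exists_sub_le_gridChord (hlip : LipschitzOnWith 1 g (Set.Icc 0 1)) (hN : 0 < N) {x : ℝ}
    (hx : x ∈ Set.Icc (0 : ℝ) 1) :
    ∃ j < N, g x - 1 / N ≤ gridSlope g N j * x + gridIntercept g N j := by
  obtain ⟨j, hj, hjx, hxj⟩ := exists_natCast_div_le_le_succ_div hN hx
  have := hlip.abs_add_slope_mul_sub_sub_le (natCast_div_mem_Icc hj.le)
    (natCast_add_one_div_mem_Icc hj) hx hjx hxj
  rw [add_one_div_sub_div] at this
  refine ⟨j, hj, ?_⟩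
  rw [gridSlope_mul_add_gridIntercept]
  linarith [(abs_le.1 this).1]

theorem gridChord_le (hlip : LipschitzOnWith 1 g (Set.Icc 0 1))
    (hconv : ConvexOn ℝ (Set.Icc 0 1) g) (hj : j < N) {x : ℝ} (hx : x ∈ Set.Icc (0 : ℝ) 1) :
    gridSlope g N j * x + gridIntercept g N j ≤ g x + 1 / N := by
  have hu := natCast_div_mem_Icc (N := N) hj.le
  have hv := natCast_add_one_div_mem_Icc hj
  rw [gridSlope_mul_add_gridIntercept]
  by_cases hxuv : x ∈ Set.Ioo ((j : ℝ) / N) ((j + 1) / N)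
  · have := hlip.abs_add_slope_mul_sub_sub_le hu hv hx hxuv.1.le hxuv.2.le
    rw [add_one_div_sub_div] at this
    linarith [(abs_le.1 this).2]
  · have hN : (0 : ℝ) < N := by exact_mod_cast Nat.zero_lt_of_lt hj
    have huv : (j : ℝ) / N < (j + 1) / N := by gcongr; linarith
    have := hconv.add_slope_mul_sub_le hu hv hx huv hxuv
    have : (0 : ℝ) ≤ 1 / N := by positivity
    linarith

theorem abs_sub_sup'_gridChord_le (hlip : LipschitzOnWith 1 g (Set.Icc 0 1))
    (hconv : ConvexOn ℝ (Set.Icc 0 1) g) (hN : 0 < N) {x : ℝ} (hx : x ∈ Set.Icc (0 : ℝ) 1) :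
    |g x - (range N).sup' (nonempty_range_iff.2 hN.ne')
      (fun j => gridSlope g N j * x + gridIntercept g N j)| ≤ 1 / N := by
  rw [abs_sub_le_iff]
  constructor
  · obtain ⟨j, hj, hle⟩ := exists_sub_le_gridChord hlip hN hx
    have := le_sup' (fun j => gridSlope g N j * x + gridIntercept g N j) (mem_range.2 hj)
    linarith
  · rw [sub_le_iff_le_add', sup'_le_iff]
    exact fun j hj => gridChord_le hlip hconv (mem_range.1 hj) hx

end grid

theorem inv_two_pow_ceil_logb_le {ε : ℝ} (hε : 0 < ε) :
    ((2 : ℝ) ^ ⌈Real.logb 2 (1 / ε)⌉₊)⁻¹ ≤ ε := by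
  have h := (Real.logb_le_iff_le_rpow one_lt_two (by positivity)).1
    (Nat.le_ceil (Real.logb 2 (1 / ε)))
  rw [Real.rpow_natCast] at h
  exact (inv_le_comm₀ (by positivity) hε).2 (by rwa [← one_div])

theorem exists_sign_mul_convexOn {s : Set ℝ} {f : ℝ → ℝ} (hf : LipschitzOnWith 1 f s)
    (hconv : ConvexOn ℝ s f ∨ ConcaveOn ℝ s f) :
    ∃ σ : ℝ, |σ| = 1 ∧
      ∃ g : ℝ → ℝ, ConvexOn ℝ s g ∧ LipschitzOnWith 1 g s ∧ ∀ x, f x = σ * g x := by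
  rcases hconv with hconvex | hconcave
  · exact ⟨1, abs_one, f, hconvex, hf, fun x => (one_mul _).symm⟩
  · refine ⟨-1, by simp, -f, hconcave.neg, .mk_one fun x hx y hy => ?_, fun x => by simp⟩
    simpa only [Pi.neg_apply, dist_neg_neg, one_mul, NNReal.coe_one] using hf.dist_le_mul x hx y hy

/-- Approximation of `1`-Lipschitz convex (or concave) functions on `[0,1]` by GroupSort
networks of grouping size `2` satisfying Assumption 1: with `n = ⌈log₂(1/ε)⌉`, the network
has depth `n + 1` and size at most `2 ⬝ 2^n - 1` (in particular `O(1/ε)`). -/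
theorem groupSortNet_approx_lipschitz_real_convex (ε : ℝ) (hε : 0 < ε) (f : ℝ → ℝ)
    (hlip : ∀ x ∈ Set.Icc (0 : ℝ) 1, ∀ y ∈ Set.Icc (0 : ℝ) 1, |f x - f y| ≤ |x - y|)
    (hconv : ConvexOn ℝ (Set.Icc (0 : ℝ) 1) f ∨ ConcaveOn ℝ (Set.Icc (0 : ℝ) 1) f) :
    ∃ N : GroupSortNet 2 1, N.Assumption1 ∧
      (∀ x ∈ Set.Icc (0 : ℝ) 1, |f x - N.eval (fun _ => x)| ≤ ε) ∧
      N.depth = ⌈Real.logb 2 (1 / ε)⌉₊ + 1 ∧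
      N.size ≤ 2 * 2 ^ ⌈Real.logb 2 (1 / ε)⌉₊ - 1 := by
  set n := ⌈Real.logb 2 (1 / ε)⌉₊
  have hεn : ((2 : ℝ) ^ n)⁻¹ ≤ ε := inv_two_pow_ceil_logb_le hε
  have hsize (a b : ℕ → ℝ) (s : ℝ) : (maxAffineNet n a b s).size ≤ 2 * 2 ^ n - 1 := by
    rw [maxAffineNet_size]; omega
  have hf : LipschitzOnWith 1 f (Set.Icc 0 1) := .mk_one hlip
  rcases Nat.eq_zero_or_pos n with hn | hn
  · -- here `1 ≤ ε`, so the constant `f 0` is already close enough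
    refine ⟨maxAffineNet n (fun _ => 0) (fun _ => f 0) 1,
      maxAffineNet_assumption1 n _ _ _ (fun _ _ => by simp) (fun _ _ => le_rfl) abs_one.le,
      fun x hx => ?_, rfl, hsize _ _ _⟩
    rw [maxAffineNet_eval_of_eq_zero n _ _ _ hn, zero_mul, zero_add]
    rw [hn, pow_zero, inv_one] at hεn
    have := hf.abs_sub_le hx ⟨le_rfl, zero_le_one⟩
    rw [sub_zero, abs_of_nonneg hx.1] at this
    linarith [hx.2]
  · obtain ⟨σ, hσ, g, hg, hgl, hfg⟩ := exists_sign_mul_convexOn hf hconv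
    refine ⟨maxAffineNet n (gridSlope g (2 ^ n)) (gridIntercept g (2 ^ n)) σ,
      maxAffineNet_assumption1 n _ _ _ (fun j hj => abs_gridSlope_le hgl hj)
        (fun j hj => abs_gridIntercept_le hgl hj) hσ.le,
      fun x hx => ?_, rfl, hsize _ _ _⟩
    rw [maxAffineNet_eval n _ _ _ hn.ne', hfg, ← mul_sub, abs_mul, hσ, one_mul]
    have := abs_sub_sup'_gridChord_le hgl hg (Nat.two_pow_pos n) hx
    rw [Nat.cast_pow, Nat.cast_ofNat, one_div] at this
    exact this.trans hεn
end
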